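/- arXiv:2605.13598 — 6 statements merged into one kernel-verified Lean document; each statement's English description precedes it below -/
import Mathlib

section
/- Let d ≥ 1, let ξ ∈ ℝ^d, let u ∈ ℂ^d satisfy the divergence-free condition ∑_{j=1}^d ξ_j u_j = 0, and let T be any d×d complex matrix. Then ∑_{i,j,m=1}^d (ξ_m ξ_i u_j − ξ_j ξ_i u_m) · conj(ξ_m T_{i,j} − ξ_j T_{i,m}) = 2 (∑_{m=1}^d ξ_m²) · ∑_{i,j=1}^d ξ_i u_j · conj(T_{i,j}). -/
/-- Fourier-symbol form of the key cancellation identity for the linearized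
incompressible Oldroyd-B system: for `ξ ∈ ℝ^d`, `u ∈ ℂ^d` divergence-free
(`∑ ξ_j u_j = 0`) and any `d × d` complex matrix `T`,
`∑_{i,j,m} (ξ_m ξ_i u_j − ξ_j ξ_i u_m) ⬝ conj(ξ_m T_{i,j} − ξ_j T_{i,m})
  = 2 (∑_m ξ_m²) ∑_{i,j} ξ_i u_j ⬝ conj(T_{i,j})`. -/
theorem stmt0 (d : ℕ) (hd : 1 ≤ d) (ξ : Fin d → ℝ) (u : Fin d → ℂ)
    (T : Matrix (Fin d) (Fin d) ℂ)
    (hdiv : ∑ j, (ξ j : ℂ) * u j = 0) :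
    ∑ i, ∑ j, ∑ m,
      ((ξ m : ℂ) * (ξ i : ℂ) * u j - (ξ j : ℂ) * (ξ i : ℂ) * u m) *
        (starRingEnd ℂ) ((ξ m : ℂ) * T i j - (ξ j : ℂ) * T i m)
      = 2 * (∑ m, ((ξ m : ℂ)) ^ 2) *
          ∑ i, ∑ j, (ξ i : ℂ) * u j * (starRingEnd ℂ) (T i j) := by
  have expand : ∀ i j m : Fin d,
      ((ξ m : ℂ) * (ξ i : ℂ) * u j - (ξ j : ℂ) * (ξ i : ℂ) * u m) *
        (starRingEnd ℂ) ((ξ m : ℂ) * T i j - (ξ j : ℂ) * T i m)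
      = (ξ m : ℂ) ^ 2 * ((ξ i : ℂ) * u j * (starRingEnd ℂ) (T i j))
        - ((ξ j : ℂ) * u j) * ((ξ m : ℂ) * ((ξ i : ℂ) * (starRingEnd ℂ) (T i m)))
        - ((ξ m : ℂ) * u m) * ((ξ j : ℂ) * ((ξ i : ℂ) * (starRingEnd ℂ) (T i j)))
        + (ξ j : ℂ) ^ 2 * ((ξ i : ℂ) * u m * (starRingEnd ℂ) (T i m)) := by
    intro i j m
    simp only [map_sub, map_mul, Complex.conj_ofReal]
    ring
  simp only [expand, Finset.sum_sub_distrib, Finset.sum_add_distrib,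
    ← Finset.mul_sum, ← Finset.sum_mul]
  rw [hdiv]
  have h3 : ∀ i j : Fin d, ∑ m, ((ξ m : ℂ) * u m) * ((ξ j : ℂ) * ((ξ i : ℂ) * (starRingEnd ℂ) (T i j)))
      = 0 := by
    intro i j
    rw [← Finset.sum_mul, hdiv, zero_mul]
  simp only [h3, Finset.sum_const_zero, zero_mul, sub_zero]
  rw [Finset.sum_comm]
  ring
end

section
/- Let η, ν₁, ν₂ > 0. There exist constants c > 0 and ρ₀ > 0 with ηρ₀ < √(2ν₁ν₂) such that for every ρ ∈ (0, ρ₀], every t ≥ 0, and all u₀, Z₀ ∈ ℂ, setting b = (1/2)·√(2ν₁ν₂ρ² − η²ρ⁴), u*(t) = (cos(bt) + (ηρ²/2)·sin(bt)/b)·u₀ + ν₁ρ·(sin(bt)/b)·Z₀ and Z*(t) = −(ν₂/2)ρ·(sin(bt)/b)·u₀ + (cos(bt) − (ηρ²/2)·sin(bt)/b)·Z₀, one has |u*(t)|² + (2ν₁/ν₂)·|Z*(t)|² ≥ c·(|u₀|² + |Z₀|²). -/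
/-!
Write `s = sin (b t) / b`, `a = ηρ²/2` and `k = 2ν₁/ν₂`. The data map is
`cos (b t) • I + s • [[0, ν₁ρ], [-ν₂ρ/2, 0]]` plus the perturbation `a s • diag(1, -1)`.
Because `k · (ν₂ρ/2) = ν₁ρ`, the off-diagonal matrix is skew for the weighted energy
`‖u‖² + k‖Z‖²`, and since `(ν₁ρ)(ν₂ρ/2) = a² + b²` the unperturbed map multiplies that energy by
`cos² + (a² + b²) s² = 1 + (a s)² ≥ 1`. The perturbation has size `|a s| ≤ a / b ≤ 1/2` once `ηρ`
is small against `√(ν₁ν₂)`, so `‖x‖²/2 - ‖y‖² ≤ ‖x + y‖²` keeps at least `3/8` of the energy,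
and `k` is comparable to `1`.
-/

open Real

lemma half_norm_sq_sub_norm_sq_le_norm_add_sq {E : Type*} [SeminormedAddCommGroup E] (x y : E) :
    ‖x‖ ^ 2 / 2 - ‖y‖ ^ 2 ≤ ‖x + y‖ ^ 2 := by
  have h : ‖x‖ ≤ ‖x + y‖ + ‖y‖ := by simpa using norm_sub_le (x + y) y
  nlinarith [add_sq_le (a := ‖x + y‖) (b := ‖y‖), norm_nonneg x, norm_nonneg y]

section InnerProductSpace

variable {F : Type*} [NormedAddCommGroup F] [InnerProductSpace ℝ F]

lemma norm_smul_add_smul_sq (x y : ℝ) (u v : F) :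
    ‖x • u + y • v‖ ^ 2 = x ^ 2 * ‖u‖ ^ 2 + 2 * (x * y) * inner ℝ u v + y ^ 2 * ‖v‖ ^ 2 := by
  rw [norm_add_sq_real, norm_smul, norm_smul, inner_smul_left, inner_smul_right, mul_pow, mul_pow,
    Real.norm_eq_abs, Real.norm_eq_abs, sq_abs, sq_abs]
  simp only [conj_trivial]
  ring

lemma weighted_norm_sq_rotation {k p q : ℝ} (hkq : k * q = p) (c s : ℝ) (u Z : F) :
    ‖c • u + (p * s) • Z‖ ^ 2 + k * ‖(-(q * s)) • u + c • Z‖ ^ 2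
      = (c ^ 2 + p * q * s ^ 2) * (‖u‖ ^ 2 + k * ‖Z‖ ^ 2) := by
  rw [norm_smul_add_smul_sq, norm_smul_add_smul_sq, real_inner_comm Z u, ← hkq]
  ring

lemma weighted_norm_sq_perturbed_rotation_ge {k p q a b : ℝ} (hk : 0 ≤ k) (hkq : k * q = p)
    (hpq : p * q = a ^ 2 + b ^ 2) {c s : ℝ} (hcs : c ^ 2 + b ^ 2 * s ^ 2 = 1) (u Z : F) :
    (1 - (a * s) ^ 2) / 2 * (‖u‖ ^ 2 + k * ‖Z‖ ^ 2)
      ≤ ‖(c + a * s) • u + (p * s) • Z‖ ^ 2 + k * ‖(-(q * s)) • u + (c - a * s) • Z‖ ^ 2 := by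
  have hrot : ‖c • u + (p * s) • Z‖ ^ 2 + k * ‖(-(q * s)) • u + c • Z‖ ^ 2
      = (1 + (a * s) ^ 2) * (‖u‖ ^ 2 + k * ‖Z‖ ^ 2) := by
    rw [weighted_norm_sq_rotation hkq, hpq]
    linear_combination (‖u‖ ^ 2 + k * ‖Z‖ ^ 2) * hcs
  have hu := half_norm_sq_sub_norm_sq_le_norm_add_sq (c • u + (p * s) • Z) ((a * s) • u)
  have hZ := half_norm_sq_sub_norm_sq_le_norm_add_sq ((-(q * s)) • u + c • Z) (-(a * s) • Z)
  rw [show c • u + (p * s) • Z + (a * s) • u = (c + a * s) • u + (p * s) • Z by module,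
    norm_smul, Real.norm_eq_abs, mul_pow, sq_abs, ← mul_pow] at hu
  rw [show -(q * s) • u + c • Z + -(a * s) • Z = -(q * s) • u + (c - a * s) • Z by module,
    norm_smul, Real.norm_eq_abs, mul_pow, sq_abs, neg_sq, ← mul_pow] at hZ
  nlinarith [mul_le_mul_of_nonneg_left hZ hk]

lemma weighted_norm_sq_cos_sin_ge {k p q a b : ℝ} (hk : 0 ≤ k)
    (hkq : k * q = p) (hpq : p * q = a ^ 2 + b ^ 2) (hb : 0 < b) (hab : 4 * a ^ 2 ≤ b ^ 2)
    (θ : ℝ) (u Z : F) :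
    3 / 8 * (‖u‖ ^ 2 + k * ‖Z‖ ^ 2)
      ≤ ‖(cos θ + a * (sin θ / b)) • u + (p * (sin θ / b)) • Z‖ ^ 2
        + k * ‖(-(q * (sin θ / b))) • u + (cos θ - a * (sin θ / b)) • Z‖ ^ 2 := by
  have hcs : cos θ ^ 2 + b ^ 2 * (sin θ / b) ^ 2 = 1 := by
    rw [div_pow, mul_div_cancel₀ _ (by positivity), cos_sq_add_sin_sq]
  have hsmall : (a * (sin θ / b)) ^ 2 ≤ 1 / 4 := by
    rw [mul_div_assoc', div_pow, div_le_iff₀ (by positivity), mul_pow]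
    nlinarith [sin_sq_le_one θ, sq_nonneg a]
  refine le_trans ?_ (weighted_norm_sq_perturbed_rotation_ge hk hkq hpq hcs u Z)
  exact mul_le_mul_of_nonneg_right (by linarith) (by positivity)

end InnerProductSpace

/-- Coercivity of the weighted energy `|u*|² + (2ν₁/ν₂)|Z*|²` of the oscillatory
parts of the low-frequency Oldroyd-B Green matrix: there are `c > 0` and
`ρ₀ > 0` with `ηρ₀ < √(2ν₁ν₂)` such that for all `0 < ρ ≤ ρ₀`, `t ≥ 0` and all
data `u₀, Z₀ ∈ ℂ`, `|u*(t)|² + (2ν₁/ν₂)|Z*(t)|² ≥ c(|u₀|² + |Z₀|²)`. -/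
theorem stmt5 (η ν₁ ν₂ : ℝ) (hη : 0 < η) (hν₁ : 0 < ν₁) (hν₂ : 0 < ν₂) :
    ∃ c : ℝ, 0 < c ∧ ∃ ρ₀ : ℝ, 0 < ρ₀ ∧ η * ρ₀ < Real.sqrt (2 * ν₁ * ν₂) ∧
      ∀ ρ : ℝ, 0 < ρ → ρ ≤ ρ₀ → ∀ t : ℝ, 0 ≤ t → ∀ u₀ Z₀ : ℂ,
        ∀ b : ℝ, b = (1 / 2) * Real.sqrt (2 * ν₁ * ν₂ * ρ ^ 2 - η ^ 2 * ρ ^ 4) →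
          ‖((Real.cos (b * t) + (η * ρ ^ 2 / 2) * (Real.sin (b * t) / b) : ℝ) : ℂ) * u₀
              + ((ν₁ * ρ * (Real.sin (b * t) / b) : ℝ) : ℂ) * Z₀‖ ^ 2
            + (2 * ν₁ / ν₂) *
              ‖-(((ν₂ / 2) * ρ * (Real.sin (b * t) / b) : ℝ) : ℂ) * u₀
                + ((Real.cos (b * t) - (η * ρ ^ 2 / 2) * (Real.sin (b * t) / b) : ℝ) : ℂ) * Z₀‖ ^ 2
          ≥ c * (‖u₀‖ ^ 2 + ‖Z₀‖ ^ 2) := by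
  set k := 2 * ν₁ / ν₂ with hk
  have hk_pos : 0 < k := by positivity
  have hsqrt := Real.sq_sqrt (by positivity : 0 ≤ 2 * ν₁ * ν₂)
  refine ⟨3 / 8 * min 1 k, by positivity, Real.sqrt (2 * ν₁ * ν₂) / (3 * η), by positivity,
    by field_simp; linarith, ?_⟩
  intro ρ hρ hρρ₀ t _ u₀ Z₀ b hb
  have hηρ : 9 * (η * ρ) ^ 2 ≤ 2 * ν₁ * ν₂ := by
    rw [le_div_iff₀ (by positivity)] at hρρ₀
    nlinarith [mul_pos hη hρ]
  have hrad : 0 < 2 * ν₁ * ν₂ * ρ ^ 2 - η ^ 2 * ρ ^ 4 := by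
    nlinarith [mul_le_mul_of_nonneg_left hηρ (sq_nonneg ρ), mul_pos (mul_pos hν₁ hν₂) (pow_pos hρ 2)]
  have hb2 : b ^ 2 = (2 * ν₁ * ν₂ * ρ ^ 2 - η ^ 2 * ρ ^ 4) / 4 := by
    rw [hb, mul_pow, Real.sq_sqrt hrad.le]
    ring
  have hb_pos : 0 < b := by rw [hb]; positivity
  have key := weighted_norm_sq_cos_sin_ge (F := ℂ) (p := ν₁ * ρ) (q := ν₂ / 2 * ρ)
    (a := η * ρ ^ 2 / 2) hk_pos.le (by rw [hk]; field_simp) (by rw [hb2]; ring) hb_pos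
    (by rw [hb2]; nlinarith [pow_pos hρ 2]) (b * t) u₀ Z₀
  simp only [← Complex.ofReal_neg, ← Complex.real_smul]
  have hmin : min 1 k * (‖u₀‖ ^ 2 + ‖Z₀‖ ^ 2) ≤ ‖u₀‖ ^ 2 + k * ‖Z₀‖ ^ 2 := by
    nlinarith [min_le_left 1 k, min_le_right 1 k, sq_nonneg ‖u₀‖, sq_nonneg ‖Z₀‖]
  linarith
end

section
/- Let η, ν₁, ν₂ > 0. There exist constants C > 0 and c > 0 such that for every ρ with 0 < ρ ≤ c, every pair of differentiable functions u, Z : ℝ → ℂ satisfying u'(t) = ν₁ ρ Z(t) and Z'(t) = −η ρ² Z(t) − (ν₂/2) ρ u(t) for all t ≥ 0, and every t ≥ 0, one has |u(t)| + |Z(t)| ≥ C·e^{−ηρ²t}·(|u(0)| + |Z(0)|). -/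
/-- Pointwise low-frequency lower bound for the linearized incompressible
Oldroyd-B system on the Fourier side: there exist `C, c > 0` such that any
solution of `u' = ν₁ρZ`, `Z' = −ηρ²Z − (ν₂/2)ρu` with `0 < ρ ≤ c` satisfies
`|u(t)| + |Z(t)| ≥ C e^{−ηρ²t}(|u(0)| + |Z(0)|)` for all `t ≥ 0`. -/
theorem stmt6 (η ν₁ ν₂ : ℝ) (hη : 0 < η) (hν₁ : 0 < ν₁) (hν₂ : 0 < ν₂) :
    ∃ C : ℝ, 0 < C ∧ ∃ c : ℝ, 0 < c ∧
      ∀ ρ : ℝ, 0 < ρ → ρ ≤ c →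
      ∀ u Z : ℝ → ℂ,
        (∀ t : ℝ, 0 ≤ t → HasDerivAt u ((ν₁ * ρ : ℂ) * Z t) t) →
        (∀ t : ℝ, 0 ≤ t →
          HasDerivAt Z (-(η * ρ ^ 2 : ℂ) * Z t - ((ν₂ / 2 : ℂ) * ρ) * u t) t) →
        ∀ t : ℝ, 0 ≤ t →
          ‖u t‖ + ‖Z t‖ ≥
            C * Real.exp (-(η * ρ ^ 2) * t) * (‖u 0‖ + ‖Z 0‖) := by
  set m : ℝ := min (ν₂ / 2) ν₁ with hm_def
  set M : ℝ := max (ν₂ / 2) ν₁ with hM_def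
  have hm : 0 < m := lt_min (by linarith) hν₁
  have hM : 0 < M := lt_of_lt_of_le hm (min_le_max)
  have hmM : m ≤ M := min_le_max
  refine ⟨Real.sqrt (m / (2 * M)), Real.sqrt_pos.mpr (by positivity), 1, one_pos, ?_⟩
  intro ρ hρ hρc u Z hu hZ t ht
  set k : ℝ := η * ρ ^ 2 with hk_def
  have hk : 0 < k := by positivity
  -- the energy
  set E : ℝ → ℝ := fun s =>
    ν₂ / 2 * ((u s).re ^ 2 + (u s).im ^ 2) + ν₁ * ((Z s).re ^ 2 + (Z s).im ^ 2) with hE_def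
  set g : ℝ → ℝ := fun s => E s * Real.exp (2 * k * s) with hg_def
  -- derivative facts
  have key : ∀ s : ℝ, 0 ≤ s → ∃ d : ℝ, HasDerivAt g d s ∧ 0 ≤ d := by
    intro s hs
    have hur : HasDerivAt (fun x => (u x).re) (ν₁ * ρ * (Z s).re) s := by
      have := Complex.reCLM.hasFDerivAt.comp_hasDerivAt s (hu s hs)
      exact this.congr_deriv (by simp [Complex.mul_re])
    have hui : HasDerivAt (fun x => (u x).im) (ν₁ * ρ * (Z s).im) s := by
      have := Complex.imCLM.hasFDerivAt.comp_hasDerivAt s (hu s hs)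
      exact this.congr_deriv (by simp [Complex.mul_im])
    have hZr : HasDerivAt (fun x => (Z x).re) (-k * (Z s).re - ν₂ / 2 * ρ * (u s).re) s := by
      have := Complex.reCLM.hasFDerivAt.comp_hasDerivAt s (hZ s hs)
      exact this.congr_deriv (by simp [Complex.mul_re, hk_def, ← Complex.ofReal_pow])
    have hZi : HasDerivAt (fun x => (Z x).im) (-k * (Z s).im - ν₂ / 2 * ρ * (u s).im) s := by
      have := Complex.imCLM.hasFDerivAt.comp_hasDerivAt s (hZ s hs)
      exact this.congr_deriv (by simp [Complex.mul_im, hk_def, ← Complex.ofReal_pow])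
    have hE' : HasDerivAt E
        (ν₂ / 2 * ((2 : ℕ) * (u s).re ^ 1 * (ν₁ * ρ * (Z s).re)
            + (2 : ℕ) * (u s).im ^ 1 * (ν₁ * ρ * (Z s).im))
          + ν₁ * ((2 : ℕ) * (Z s).re ^ 1 * (-k * (Z s).re - ν₂ / 2 * ρ * (u s).re)
            + (2 : ℕ) * (Z s).im ^ 1 * (-k * (Z s).im - ν₂ / 2 * ρ * (u s).im))) s := by
      exact (((hur.pow 2).add (hui.pow 2)).const_mul (ν₂ / 2)).add
        (((hZr.pow 2).add (hZi.pow 2)).const_mul ν₁)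
    have hexp : HasDerivAt (fun s : ℝ => Real.exp (2 * k * s))
        (Real.exp (2 * k * s) * (2 * k)) s := by
      simpa using ((hasDerivAt_id s).const_mul (2 * k)).exp
    refine ⟨_, hE'.mul hexp, ?_⟩
    have : (ν₂ / 2 * ((2 : ℕ) * (u s).re ^ 1 * (ν₁ * ρ * (Z s).re)
            + (2 : ℕ) * (u s).im ^ 1 * (ν₁ * ρ * (Z s).im))
          + ν₁ * ((2 : ℕ) * (Z s).re ^ 1 * (-k * (Z s).re - ν₂ / 2 * ρ * (u s).re)
            + (2 : ℕ) * (Z s).im ^ 1 * (-k * (Z s).im - ν₂ / 2 * ρ * (u s).im)))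
          * Real.exp (2 * k * s) + E s * (Real.exp (2 * k * s) * (2 * k))
        = 2 * k * (ν₂ / 2) * ((u s).re ^ 2 + (u s).im ^ 2) * Real.exp (2 * k * s) := by
      simp only [hE_def]
      push_cast
      ring
    rw [this]
    positivity
  -- monotonicity of g on [0, ∞)
  have hg_mono : ∀ s : ℝ, 0 ≤ s → g 0 ≤ g s := by
    intro s hs
    have hcont : ContinuousOn g (Set.Icc 0 s) := by
      intro x hx
      obtain ⟨d, hd, _⟩ := key x hx.1
      exact hd.continuousAt.continuousWithinAt
    have hmono : MonotoneOn g (Set.Icc 0 s) := by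
      apply monotoneOn_of_deriv_nonneg (convex_Icc 0 s) hcont
      · intro x hx
        rw [interior_Icc] at hx
        obtain ⟨d, hd, _⟩ := key x hx.1.le
        exact hd.differentiableAt.differentiableWithinAt
      · intro x hx
        rw [interior_Icc] at hx
        obtain ⟨d, hd, hd0⟩ := key x hx.1.le
        rw [hd.deriv]; exact hd0
    exact hmono (Set.left_mem_Icc.mpr hs) (Set.right_mem_Icc.mpr hs) hs
  have hE_low : Real.exp (-(2 * k) * t) * E 0 ≤ E t := by
    have h := hg_mono t ht
    simp only [hg_def, mul_zero, Real.exp_zero, mul_one] at h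
    have hepos : (0 : ℝ) < Real.exp (2 * k * t) := Real.exp_pos _
    rw [neg_mul, Real.exp_neg, inv_mul_le_iff₀ hepos]
    linarith [h]
  -- comparison with abs
  have habs : ∀ w : ℂ, ‖w‖ ^ 2 = w.re ^ 2 + w.im ^ 2 := by
    intro w; rw [Complex.sq_norm, Complex.normSq_apply]; ring
  set A := ‖u t‖; set B := ‖Z t‖
  set A0 := ‖u 0‖; set B0 := ‖Z 0‖
  have hA : 0 ≤ A := norm_nonneg _
  have hB : 0 ≤ B := norm_nonneg _
  have hA0 : 0 ≤ A0 := norm_nonneg _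
  have hB0 : 0 ≤ B0 := norm_nonneg _
  have hEt : E t ≤ M * (A + B) ^ 2 := by
    have h1 : ν₂ / 2 ≤ M := le_max_left _ _
    have h2 : ν₁ ≤ M := le_max_right _ _
    have hu2 : (u t).re ^ 2 + (u t).im ^ 2 = A ^ 2 := (habs (u t)).symm
    have hz2 : (Z t).re ^ 2 + (Z t).im ^ 2 = B ^ 2 := (habs (Z t)).symm
    simp only [hE_def, hu2, hz2]
    nlinarith [sq_nonneg A, sq_nonneg B, mul_nonneg hA hB]
  have hE0 : m / 2 * (A0 + B0) ^ 2 ≤ E 0 := by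
    have h1 : m ≤ ν₂ / 2 := min_le_left _ _
    have h2 : m ≤ ν₁ := min_le_right _ _
    have hu2 : (u 0).re ^ 2 + (u 0).im ^ 2 = A0 ^ 2 := (habs (u 0)).symm
    have hz2 : (Z 0).re ^ 2 + (Z 0).im ^ 2 = B0 ^ 2 := (habs (Z 0)).symm
    simp only [hE_def, hu2, hz2]
    nlinarith [sq_nonneg (A0 - B0), sq_nonneg A0, sq_nonneg B0]
  -- assemble
  set C : ℝ := Real.sqrt (m / (2 * M)) with hC_def
  have hC2 : C ^ 2 = m / (2 * M) := Real.sq_sqrt (by positivity)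
  have hCpos : 0 < C := Real.sqrt_pos.mpr (by positivity)
  have hexp2 : Real.exp (-(2 * k) * t) = Real.exp (-k * t) ^ 2 := by
    rw [← Real.exp_nat_mul]; push_cast; ring_nf
  have hsq : (C * Real.exp (-k * t) * (A0 + B0)) ^ 2 ≤ (A + B) ^ 2 := by
    have hEch : Real.exp (-(2 * k) * t) * (m / 2 * (A0 + B0) ^ 2) ≤ M * (A + B) ^ 2 := by
      calc Real.exp (-(2 * k) * t) * (m / 2 * (A0 + B0) ^ 2)
          ≤ Real.exp (-(2 * k) * t) * E 0 := by
            apply mul_le_mul_of_nonneg_left hE0 (Real.exp_pos _).le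
        _ ≤ E t := hE_low
        _ ≤ M * (A + B) ^ 2 := hEt
    rw [hexp2] at hEch
    calc (C * Real.exp (-k * t) * (A0 + B0)) ^ 2
        = (Real.exp (-k * t) ^ 2 * (m / 2 * (A0 + B0) ^ 2)) / M := by
          rw [mul_pow, mul_pow, hC2]; field_simp
      _ ≤ (M * (A + B) ^ 2) / M := by gcongr
      _ = (A + B) ^ 2 := by field_simp
  have hrhs : 0 ≤ C * Real.exp (-k * t) * (A0 + B0) := by positivity
  have hfin := Real.sqrt_le_sqrt hsq
  rw [Real.sqrt_sq hrhs, Real.sqrt_sq (add_nonneg hA hB)] at hfin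
  exact hfin
end

section
/- Let η, ν₁, ν₂ > 0 and fix c > 0. There exist constants C > 0 and δ > 0 such that for every ρ with 0 < ρ ≤ c, every pair of differentiable functions u, Z : ℝ → ℂ satisfying u'(t) = ν₁ ρ Z(t) and Z'(t) = −η ρ² Z(t) − (ν₂/2) ρ u(t) for all t ≥ 0, and every t ≥ 0, one has |u(t)| + |Z(t)| ≤ C·e^{−δρ²t}·(|u(0)| + |Z(0)|). -/
/-!
Lyapunov argument. Along the flow, the coupling terms in the derivative of
`(ν₂/2)‖u‖² + ν₁‖Z‖²` cancel, which leaves only the dissipation `-2ν₁ηρ²‖Z‖²`. Adding the small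
cross term `ερ⟪u, Z⟫` also damps `u`: for `L = (ν₂/2)‖u‖² + ν₁‖Z‖² + ερ⟪u, Z⟫` one gets
`L' ≤ -(ε/2)ρ² L` as soon as `ε ≤ η/2` and `εηρ² ≤ ν₁ν₂`. If also `ερ ≤ min (ν₂/2) ν₁`, then
`L` is comparable with `‖u‖² + ‖Z‖²`. For `ρ ≤ c` a single `ε` satisfies all three conditions,
and Grönwall's inequality gives the bound with `δ = ε/4`.
-/

open Real
open scoped InnerProductSpace

theorem le_mul_exp_of_hasDerivAt_le_neg_mul {L L' : ℝ → ℝ} {k : ℝ}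
    (hL : ∀ s, 0 ≤ s → HasDerivAt L (L' s) s) (hdecay : ∀ s, 0 ≤ s → L' s ≤ -k * L s)
    {t : ℝ} (ht : 0 ≤ t) : L t ≤ L 0 * exp (-k * t) := by
  have hbound := le_gronwallBound_of_liminf_deriv_right_le (f := L) (f' := L') (a := 0) (b := t)
    (δ := L 0) (K := -k) (ε := 0)
    (fun s hs => (hL s hs.1).continuousAt.continuousWithinAt)
    (fun s hs _ hr => (hL s hs.1).hasDerivWithinAt.liminf_right_slope_le hr) le_rfl
    (fun s hs => by simpa using hdecay s hs.1) t ⟨ht, le_rfl⟩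
  simpa [gronwallBound_ε0] using hbound

theorem add_le_sqrt_mul_add_of_sq_add_sq_le {x y x₀ y₀ K : ℝ} (hx₀ : 0 ≤ x₀) (hy₀ : 0 ≤ y₀)
    (hK : 0 ≤ K) (h : x ^ 2 + y ^ 2 ≤ K * (x₀ ^ 2 + y₀ ^ 2)) :
    x + y ≤ √(2 * K) * (x₀ + y₀) := by
  rw [← Real.sqrt_sq (add_nonneg hx₀ hy₀), ← Real.sqrt_mul (by positivity)]
  refine (le_abs_self _).trans (Real.abs_le_sqrt ?_)
  nlinarith [sq_nonneg (x - y), mul_nonneg hx₀ hy₀]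

section PairQuadForm

variable {E : Type*} [NormedAddCommGroup E] [InnerProductSpace ℝ E]

def pairQuadForm (a b s : ℝ) (v w : E) : ℝ := a * ‖v‖ ^ 2 + b * ‖w‖ ^ 2 + s * ⟪v, w⟫_ℝ

theorem pairQuadForm_nonneg {a b s : ℝ} (ha : 0 ≤ a) (hb : 0 ≤ b) (hs : s ^ 2 ≤ 4 * a * b)
    (v w : E) : 0 ≤ pairQuadForm a b s v w := by
  have hinner : |s * ⟪v, w⟫_ℝ| ≤ |s| * (‖v‖ * ‖w‖) := by
    rw [abs_mul]
    exact mul_le_mul_of_nonneg_left (abs_real_inner_le_norm v w) (abs_nonneg s)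
  have hamgm : |s| * (‖v‖ * ‖w‖) ≤ a * ‖v‖ ^ 2 + b * ‖w‖ ^ 2 := by
    refine (abs_le_of_sq_le_sq' ?_ (by positivity)).2
    nlinarith [sq_nonneg (a * ‖v‖ ^ 2 - b * ‖w‖ ^ 2), sq_abs s,
      mul_nonneg (sq_nonneg (‖v‖ * ‖w‖)) (sub_nonneg.2 hs)]
  unfold pairQuadForm
  linarith [neg_abs_le (s * ⟪v, w⟫_ℝ)]

theorem mul_pairQuadForm (k a b s : ℝ) (v w : E) :
    k * pairQuadForm a b s v w = pairQuadForm (k * a) (k * b) (k * s) v w := by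
  unfold pairQuadForm; ring

theorem pairQuadForm_le_pairQuadForm {a b s a' b' s' : ℝ} (ha : a ≤ a') (hb : b ≤ b')
    (hs : (s' - s) ^ 2 ≤ 4 * (a' - a) * (b' - b)) (v w : E) :
    pairQuadForm a b s v w ≤ pairQuadForm a' b' s' v w := by
  have := pairQuadForm_nonneg (sub_nonneg.2 ha) (sub_nonneg.2 hb) hs v w
  unfold pairQuadForm at *; linarith

theorem pairQuadForm_diag (m : ℝ) (v w : E) :
    pairQuadForm m m 0 v w = m * (‖v‖ ^ 2 + ‖w‖ ^ 2) := by
  unfold pairQuadForm; ring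

theorem min_div_two_mul_le_pairQuadForm {a b s : ℝ} (hs : |s| ≤ min a b) (v w : E) :
    min a b / 2 * (‖v‖ ^ 2 + ‖w‖ ^ 2) ≤ pairQuadForm a b s v w := by
  have hm : 0 ≤ min a b := (abs_nonneg s).trans hs
  have hsq : s ^ 2 ≤ min a b ^ 2 := sq_abs s ▸ pow_le_pow_left₀ (abs_nonneg s) hs 2
  have ha : min a b / 2 ≤ a - min a b / 2 := by linarith [min_le_left a b]
  have hb : min a b / 2 ≤ b - min a b / 2 := by linarith [min_le_right a b]
  rw [← pairQuadForm_diag]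
  apply pairQuadForm_le_pairQuadForm (by linarith) (by linarith)
  nlinarith [mul_le_mul ha hb (by positivity) (by linarith)]

theorem pairQuadForm_le_add_mul {a b s : ℝ} (hs : |s| ≤ min a b) (v w : E) :
    pairQuadForm a b s v w ≤ (a + b) * (‖v‖ ^ 2 + ‖w‖ ^ 2) := by
  have hm : 0 ≤ min a b := (abs_nonneg s).trans hs
  have hsq : s ^ 2 ≤ min a b ^ 2 := sq_abs s ▸ pow_le_pow_left₀ (abs_nonneg s) hs 2
  have hab : min a b ^ 2 ≤ a * b :=
    sq (min a b) ▸ mul_le_mul (min_le_left a b) (min_le_right a b) hm (hm.trans (min_le_left a b))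
  rw [← pairQuadForm_diag]
  apply pairQuadForm_le_pairQuadForm (by linarith [min_le_right a b])
    (by linarith [min_le_left a b])
  nlinarith

theorem hasDerivAt_pairQuadForm {u Z : ℝ → E} {α β γ t : ℝ} (a b s : ℝ)
    (hu : HasDerivAt u (α • Z t) t) (hZ : HasDerivAt Z (-β • Z t - γ • u t) t) :
    HasDerivAt (fun r => pairQuadForm a b s (u r) (Z r))
      (-pairQuadForm (s * γ) (2 * b * β - s * α) (2 * b * γ + s * β - 2 * a * α) (u t) (Z t))
      t := by
  have h := ((hu.norm_sq.const_mul a).add (hZ.norm_sq.const_mul b)).add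
    ((hu.inner ℝ hZ).const_mul s)
  refine h.congr_deriv ?_
  simp only [pairQuadForm, inner_sub_right, inner_smul_right, inner_smul_left,
    real_inner_self_eq_norm_sq, real_inner_comm (u t), RCLike.conj_to_real]
  ring

theorem oldroyd_energy_le_mul_exp {η ν₁ ν₂ ρ ε : ℝ} (hν₁ : 0 ≤ ν₁) (hν₂ : 0 ≤ ν₂)
    (hε : 0 ≤ ε) (hεη : ε ≤ η / 2) (hερ : ε * η * ρ ^ 2 ≤ ν₁ * ν₂) {u Z : ℝ → E}
    (hu : ∀ t, 0 ≤ t → HasDerivAt u ((ν₁ * ρ) • Z t) t)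
    (hZ : ∀ t, 0 ≤ t → HasDerivAt Z (-(η * ρ ^ 2) • Z t - (ν₂ / 2 * ρ) • u t) t)
    {t : ℝ} (ht : 0 ≤ t) :
    pairQuadForm (ν₂ / 2) ν₁ (ε * ρ) (u t) (Z t) ≤
      pairQuadForm (ν₂ / 2) ν₁ (ε * ρ) (u 0) (Z 0) * exp (-(ε / 2 * ρ ^ 2) * t) := by
  refine le_mul_exp_of_hasDerivAt_le_neg_mul
    (fun s hs => hasDerivAt_pairQuadForm _ _ _ (hu s hs) (hZ s hs)) (fun s _ => ?_) ht
  rw [neg_mul, neg_le_neg_iff, mul_pairQuadForm]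
  have hρ2 : 0 ≤ ρ ^ 2 := sq_nonneg ρ
  apply pairQuadForm_le_pairQuadForm
  · nlinarith [mul_nonneg (mul_nonneg hε hν₂) hρ2]
  · nlinarith [mul_nonneg (mul_nonneg hν₁ hρ2) (by linarith : 0 ≤ 2 * η - 3 / 2 * ε)]
  · have hη : 0 ≤ η - ε / 2 := by linarith
    calc _ = ε * ρ ^ 4 * (ε * ρ ^ 2 * (η - ε / 2) ^ 2) := by ring
      _ ≤ ε * ρ ^ 4 * (ε * ρ ^ 2 * η ^ 2) := by gcongr; linarith
      _ = ε * ρ ^ 4 * (ε * η * ρ ^ 2 * η) := by ring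
      _ ≤ ε * ρ ^ 4 * (ν₁ * ν₂ * η) := by gcongr; linarith
      _ ≤ ε * ρ ^ 4 * (ν₁ * ν₂ * (2 * η - 3 / 2 * ε)) := by
          gcongr ε * ρ ^ 4 * (ν₁ * ν₂ * ?_); linarith
      _ = _ := by ring

theorem oldroyd_norm_sq_le_mul_exp {η ν₁ ν₂ ρ ε : ℝ} (hν₁ : 0 < ν₁) (hν₂ : 0 < ν₂)
    (hε : 0 ≤ ε) (hεη : ε ≤ η / 2) (hερ : ε * η * ρ ^ 2 ≤ ν₁ * ν₂)
    (hερm : |ε * ρ| ≤ min (ν₂ / 2) ν₁) {u Z : ℝ → E}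
    (hu : ∀ t, 0 ≤ t → HasDerivAt u ((ν₁ * ρ) • Z t) t)
    (hZ : ∀ t, 0 ≤ t → HasDerivAt Z (-(η * ρ ^ 2) • Z t - (ν₂ / 2 * ρ) • u t) t)
    {t : ℝ} (ht : 0 ≤ t) :
    ‖u t‖ ^ 2 + ‖Z t‖ ^ 2 ≤ (ν₂ / 2 + ν₁) / (min (ν₂ / 2) ν₁ / 2) *
      exp (-(ε / 2 * ρ ^ 2) * t) * (‖u 0‖ ^ 2 + ‖Z 0‖ ^ 2) := by
  have hm : 0 < min (ν₂ / 2) ν₁ := lt_min (by positivity) hν₁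
  have hdecay := oldroyd_energy_le_mul_exp hν₁.le hν₂.le hε hεη hερ hu hZ ht
  have hlow := min_div_two_mul_le_pairQuadForm hερm (u t) (Z t)
  have hup := pairQuadForm_le_add_mul hερm (u 0) (Z 0)
  rw [div_mul_eq_mul_div, div_mul_eq_mul_div, le_div_iff₀ (by positivity)]
  nlinarith [mul_le_mul_of_nonneg_right hup (exp_pos (-(ε / 2 * ρ ^ 2) * t)).le]

end PairQuadForm

theorem exists_oldroyd_decay_rate {η ν₁ ν₂ c : ℝ} (hη : 0 < η) (hν₁ : 0 < ν₁) (hν₂ : 0 < ν₂)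
    (hc : 0 < c) :
    ∃ ε, 0 < ε ∧ ε ≤ η / 2 ∧ ∀ ρ, 0 < ρ → ρ ≤ c →
      ε * η * ρ ^ 2 ≤ ν₁ * ν₂ ∧ |ε * ρ| ≤ min (ν₂ / 2) ν₁ := by
  have hm : 0 < min (ν₂ / 2) ν₁ := lt_min (by positivity) hν₁
  set ε := min (min (η / 2) (ν₁ * ν₂ / (η * c ^ 2))) (min (ν₂ / 2) ν₁ / c)
  have hε : 0 < ε := lt_min (lt_min (by positivity) (by positivity)) (by positivity)
  have hεc₂ : ε * (η * c ^ 2) ≤ ν₁ * ν₂ :=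
    (le_div_iff₀ (by positivity)).1 ((min_le_left _ _).trans (min_le_right _ _))
  have hεc : ε * c ≤ min (ν₂ / 2) ν₁ := (le_div_iff₀ hc).1 (min_le_right _ _)
  refine ⟨ε, hε, (min_le_left _ _).trans (min_le_left _ _), fun ρ hρ hρc => ⟨?_, ?_⟩⟩
  · nlinarith [mul_le_mul_of_nonneg_left (pow_le_pow_left₀ hρ.le hρc 2) (mul_pos hε hη).le]
  · rw [abs_of_pos (by positivity)]
    nlinarith

/-- Pointwise low-frequency upper bound for the linearized incompressible
Oldroyd-B system on the Fourier side: given any `c > 0` there exist `C, δ > 0`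
such that any solution of `u' = ν₁ρZ`, `Z' = −ηρ²Z − (ν₂/2)ρu` with
`0 < ρ ≤ c` satisfies `|u(t)| + |Z(t)| ≤ C e^{−δρ²t}(|u(0)| + |Z(0)|)` for all
`t ≥ 0`. -/
theorem stmt7 (η ν₁ ν₂ : ℝ) (hη : 0 < η) (hν₁ : 0 < ν₁) (hν₂ : 0 < ν₂)
    (c : ℝ) (hc : 0 < c) :
    ∃ C : ℝ, 0 < C ∧ ∃ δ : ℝ, 0 < δ ∧
      ∀ ρ : ℝ, 0 < ρ → ρ ≤ c →
      ∀ u Z : ℝ → ℂ,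
        (∀ t : ℝ, 0 ≤ t → HasDerivAt u ((ν₁ * ρ : ℂ) * Z t) t) →
        (∀ t : ℝ, 0 ≤ t →
          HasDerivAt Z (-(η * ρ ^ 2 : ℂ) * Z t - ((ν₂ / 2 : ℂ) * ρ) * u t) t) →
        ∀ t : ℝ, 0 ≤ t →
          ‖u t‖ + ‖Z t‖ ≤
            C * Real.exp (-δ * ρ ^ 2 * t) * (‖u 0‖ + ‖Z 0‖) := by
  obtain ⟨ε, hε, hεη, hεrate⟩ := exists_oldroyd_decay_rate hη hν₁ hν₂ hc
  have hm : 0 < min (ν₂ / 2) ν₁ := lt_min (by positivity) hν₁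
  refine ⟨√(2 * ((ν₂ / 2 + ν₁) / (min (ν₂ / 2) ν₁ / 2))), by positivity, ε / 4, by positivity, ?_⟩
  intro ρ hρ hρc u Z hu hZ t ht
  obtain ⟨hερ, hερm⟩ := hεrate ρ hρ hρc
  have hu' : ∀ s, 0 ≤ s → HasDerivAt u ((ν₁ * ρ) • Z s) s := fun s hs => by
    simpa [Complex.real_smul] using hu s hs
  have hZ' : ∀ s, 0 ≤ s → HasDerivAt Z (-(η * ρ ^ 2) • Z s - (ν₂ / 2 * ρ) • u s) s :=
    fun s hs => by convert hZ s hs using 1; simp [Complex.real_smul]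
  calc ‖u t‖ + ‖Z t‖ ≤ √(2 * ((ν₂ / 2 + ν₁) / (min (ν₂ / 2) ν₁ / 2) *
        exp (-(ε / 2 * ρ ^ 2) * t))) * (‖u 0‖ + ‖Z 0‖) :=
      add_le_sqrt_mul_add_of_sq_add_sq_le (norm_nonneg _) (norm_nonneg _) (by positivity)
        (oldroyd_norm_sq_le_mul_exp hν₁ hν₂ hε.le hεη hερ hερm hu' hZ' ht)
    _ = _ := by
      rw [← mul_assoc, Real.sqrt_mul' _ (exp_pos _).le, ← exp_half]
      ring_nf
end

section
/- Let η, ν₁, ν₂ > 0 and fix c > 0. There exist constants C > 0 and δ > 0 such that for every ρ ≥ c, every pair of differentiable functions u, Z : ℝ → ℂ satisfying u'(t) = ν₁ ρ Z(t) and Z'(t) = −η ρ² Z(t) − (ν₂/2) ρ u(t) for all t ≥ 0, and every t ≥ 0, one has |u(t)| + |Z(t)| ≤ C·e^{−δt}·(|u(0)| + |Z(0)|). -/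
set_option maxHeartbeats 1000000 in
lemma stmt8_keyA (η ν₁ ν₂ c ρ γ δ S T X : ℝ)
    (hη : 0 < η) (hν₁ : 0 < ν₁) (hν₂ : 0 < ν₂) (hc : 0 < c) (hρ : c ≤ ρ)
    (hγ : 0 < γ) (hδ : 0 < δ)
    (hγc2 : γ * (ν₁ * ν₂ + 4 * η ^ 2 * c ^ 2) ≤ 2 * ν₁ * η * c ^ 2 * ν₂)
    (hγ3 : γ ≤ c * ν₂) (hγ4 : γ ≤ 2 * c * ν₁)
    (hδ1 : 3 * δ ≤ η * c ^ 2) (hδ2 : 8 * δ ≤ γ)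
    (hS0 : 0 ≤ S) (hT0 : 0 ≤ T)
    (h1 : -16 * ν₂ * γ * η * ρ ^ 2 * X ≤ ν₂ ^ 2 * γ * ρ * S + 64 * γ * η ^ 2 * ρ ^ 3 * T)
    (h2 : 32 * δ * γ * ν₂ * X ≤ 16 * δ * γ * ν₂ * (S + T)) :
    (-4 * ν₁ * η * ρ ^ 3 * T + γ * ν₁ * ρ * T
        - γ * η * ρ ^ 2 * X - γ * ν₂ / 2 * ρ * S)
      + 2 * δ * (ν₂ * ρ * S + 2 * ν₁ * ρ * T + γ * X) ≤ 0 := by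
  have hρ0 : 0 < ρ := lt_of_lt_of_le hc hρ
  have hρ2 : c ^ 2 ≤ ρ ^ 2 := by nlinarith
  have hγρ : γ ≤ ρ * ν₂ := by nlinarith
  have hγρ' : γ ≤ 2 * ρ * ν₁ := by nlinarith
  have h4γ : 4 * γ * η ^ 2 ≤ 2 * ν₁ * η * ν₂ := by
    nlinarith [mul_nonneg (mul_nonneg hγ.le hν₁.le) hν₂.le]
  have hi : 4 * γ * η ^ 2 * ρ ^ 2 + γ * ν₁ * ν₂ ≤ 2 * ν₁ * η * ν₂ * ρ ^ 2 := by
    nlinarith [mul_nonneg (sub_nonneg.2 h4γ) (sub_nonneg.2 hρ2)]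
  have hCS : 0 ≤ -(-7 * ν₂ ^ 2 * γ * ρ + 32 * δ * ν₂ ^ 2 * ρ + 16 * δ * γ * ν₂) := by
    nlinarith [mul_nonneg (sub_nonneg.2 hδ2) (mul_nonneg (sq_nonneg ν₂) hρ0.le),
      mul_nonneg (sub_nonneg.2 hγρ) (mul_nonneg hγ.le hν₂.le),
      mul_nonneg (sub_nonneg.2 hδ2) (mul_nonneg hγ.le hν₂.le),
      mul_nonneg (mul_nonneg hγ.le (sq_nonneg ν₂)) hρ0.le]
  have hCT : 0 ≤ -(-64 * ν₂ * ν₁ * η * ρ ^ 3 + 16 * ν₂ * ν₁ * γ * ρ + 64 * δ * ν₁ * ν₂ * ρ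
      + 64 * γ * η ^ 2 * ρ ^ 3 + 16 * δ * γ * ν₂) := by
    have hδρ : 3 * δ ≤ η * ρ ^ 2 := by nlinarith
    nlinarith [mul_nonneg (sub_nonneg.2 hi) hρ0.le,
      mul_nonneg (sub_nonneg.2 hδρ) (mul_nonneg (mul_nonneg hν₁.le hν₂.le) hρ0.le),
      mul_nonneg (sub_nonneg.2 hγρ') (mul_nonneg hδ.le hν₂.le)]
  have main : 16 * ν₂ * ((-4 * ν₁ * η * ρ ^ 3 * T + γ * ν₁ * ρ * T
        - γ * η * ρ ^ 2 * X - γ * ν₂ / 2 * ρ * S)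
      + 2 * δ * (ν₂ * ρ * S + 2 * ν₁ * ρ * T + γ * X)) ≤ 0 := by
    nlinarith [h1, h2, mul_nonneg hS0 hCS, mul_nonneg hT0 hCT]
  by_contra hcon
  push_neg at hcon
  nlinarith [mul_pos (by positivity : (0:ℝ) < 16 * ν₂) hcon]

lemma stmt8_re_deriv (f : ℝ → ℂ) (d : ℂ) (t : ℝ) (h : HasDerivAt f d t) :
    HasDerivAt (fun s => (f s).re) d.re t := by
  have h2 : HasDerivAt (fun s => Complex.reCLM (f s)) (Complex.reCLM d) t :=
    Complex.reCLM.hasFDerivAt.comp_hasDerivAt t h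
  simpa using h2

lemma stmt8_im_deriv (f : ℝ → ℂ) (d : ℂ) (t : ℝ) (h : HasDerivAt f d t) :
    HasDerivAt (fun s => (f s).im) d.im t := by
  have h2 : HasDerivAt (fun s => Complex.imCLM (f s)) (Complex.imCLM d) t :=
    Complex.imCLM.hasFDerivAt.comp_hasDerivAt t h
  simpa using h2

lemma stmt8_young1 (ν₂ γ η ρ a b p q : ℝ) (hγ : 0 ≤ γ) (hρ : 0 ≤ ρ) :
    -16 * ν₂ * γ * η * ρ ^ 2 * (a * p + b * q)
      ≤ ν₂ ^ 2 * γ * ρ * (a ^ 2 + b ^ 2) + 64 * γ * η ^ 2 * ρ ^ 3 * (p ^ 2 + q ^ 2) := by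
  nlinarith [mul_nonneg (mul_nonneg hγ hρ) (sq_nonneg (ν₂ * a + 8 * η * ρ * p)),
    mul_nonneg (mul_nonneg hγ hρ) (sq_nonneg (ν₂ * b + 8 * η * ρ * q))]

lemma stmt8_young2 (δ γ ν₂ a b p q : ℝ) (h : 0 ≤ δ * γ * ν₂) :
    32 * δ * γ * ν₂ * (a * p + b * q)
      ≤ 16 * δ * γ * ν₂ * ((a ^ 2 + b ^ 2) + (p ^ 2 + q ^ 2)) := by
  nlinarith [mul_nonneg h (sq_nonneg (a - p)), mul_nonneg h (sq_nonneg (b - q))]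

lemma stmt8_low (ν₁ ν₂ γ ρ a b p q : ℝ) (hγ0 : 0 ≤ γ)
    (hγρ : γ ≤ ρ * ν₂) (hγρ' : γ ≤ 2 * ρ * ν₁) :
    ρ * (ν₂ / 2 * (a ^ 2 + b ^ 2) + ν₁ * (p ^ 2 + q ^ 2))
      ≤ ν₂ * ρ * (a ^ 2 + b ^ 2) + 2 * ν₁ * ρ * (p ^ 2 + q ^ 2)
        + γ * (a * p + b * q) := by
  nlinarith [mul_nonneg hγ0 (sq_nonneg (a + p)), mul_nonneg hγ0 (sq_nonneg (b + q)),
    mul_nonneg (sub_nonneg.2 hγρ) (add_nonneg (sq_nonneg a) (sq_nonneg b)),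
    mul_nonneg (sub_nonneg.2 hγρ') (add_nonneg (sq_nonneg p) (sq_nonneg q))]

lemma stmt8_up (ν₁ ν₂ γ ρ a b p q : ℝ) (hγ0 : 0 ≤ γ)
    (hγρ : γ ≤ ρ * ν₂) (hγρ' : γ ≤ 2 * ρ * ν₁) :
    ν₂ * ρ * (a ^ 2 + b ^ 2) + 2 * ν₁ * ρ * (p ^ 2 + q ^ 2) + γ * (a * p + b * q)
      ≤ ρ * (3 * ν₂ / 2 * (a ^ 2 + b ^ 2) + 3 * ν₁ * (p ^ 2 + q ^ 2)) := by
  nlinarith [mul_nonneg hγ0 (sq_nonneg (a - p)), mul_nonneg hγ0 (sq_nonneg (b - q)),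
    mul_nonneg (sub_nonneg.2 hγρ) (add_nonneg (sq_nonneg a) (sq_nonneg b)),
    mul_nonneg (sub_nonneg.2 hγρ') (add_nonneg (sq_nonneg p) (sq_nonneg q))]

lemma stmt8_minmax1 (m ν₁ ν₂ x y : ℝ) (h1 : m ≤ ν₂ / 2) (h2 : m ≤ ν₁)
    (hx : 0 ≤ x) (hy : 0 ≤ y) (hm : 0 ≤ m) :
    m * ((x + y) ^ 2) ≤ 2 * (ν₂ / 2 * x ^ 2 + ν₁ * y ^ 2) := by
  nlinarith [mul_nonneg hm (sq_nonneg (x - y)),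
    mul_nonneg (sub_nonneg.2 h1) (sq_nonneg x),
    mul_nonneg (sub_nonneg.2 h2) (sq_nonneg y)]

lemma stmt8_minmax2 (M ν₁ ν₂ x y : ℝ) (h1 : ν₂ / 2 ≤ M) (h2 : ν₁ ≤ M)
    (hx : 0 ≤ x) (hy : 0 ≤ y) (hM : 0 ≤ M) :
    3 * ν₂ / 2 * x ^ 2 + 3 * ν₁ * y ^ 2 ≤ 3 * M * ((x + y) ^ 2) := by
  nlinarith [mul_nonneg (sub_nonneg.2 h1) (sq_nonneg x),
    mul_nonneg (sub_nonneg.2 h2) (sq_nonneg y),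
    mul_nonneg (mul_nonneg hM hx) hy]

set_option maxHeartbeats 1000000 in
/-- Pointwise high-frequency upper bound for the linearized incompressible
Oldroyd-B system on the Fourier side: given any `c > 0` there exist `C, δ > 0`
such that any solution of `u' = ν₁ρZ`, `Z' = −ηρ²Z − (ν₂/2)ρu` with `ρ ≥ c`
satisfies the uniform exponential decay
`|u(t)| + |Z(t)| ≤ C e^{−δt}(|u(0)| + |Z(0)|)` for all `t ≥ 0`. -/
theorem stmt8 (η ν₁ ν₂ : ℝ) (hη : 0 < η) (hν₁ : 0 < ν₁) (hν₂ : 0 < ν₂)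
    (c : ℝ) (hc : 0 < c) :
    ∃ C : ℝ, 0 < C ∧ ∃ δ : ℝ, 0 < δ ∧
      ∀ ρ : ℝ, c ≤ ρ →
      ∀ u Z : ℝ → ℂ,
        (∀ t : ℝ, 0 ≤ t → HasDerivAt u ((ν₁ * ρ : ℂ) * Z t) t) →
        (∀ t : ℝ, 0 ≤ t →
          HasDerivAt Z (-(η * ρ ^ 2 : ℂ) * Z t - ((ν₂ / 2 : ℂ) * ρ) * u t) t) →
        ∀ t : ℝ, 0 ≤ t →
          ‖u t‖ + ‖Z t‖ ≤
            C * Real.exp (-δ * t) * (‖u 0‖ + ‖Z 0‖) := by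
  set m : ℝ := min (ν₂ / 2) ν₁ with hmdef
  set M : ℝ := max (ν₂ / 2) ν₁ with hMdef
  have hm : 0 < m := lt_min (by positivity) hν₁
  have hM : 0 < M := lt_of_lt_of_le hm min_le_max
  have hmν₂ : m ≤ ν₂ / 2 := min_le_left _ _
  have hmν₁ : m ≤ ν₁ := min_le_right _ _
  have hMν₂ : ν₂ / 2 ≤ M := le_max_left _ _
  have hMν₁ : ν₁ ≤ M := le_max_right _ _
  set γ : ℝ := min (c * ν₂) (min (2 * c * ν₁)
    ((2 * ν₁ * η * c ^ 2 * ν₂) / (ν₁ * ν₂ + 4 * η ^ 2 * c ^ 2))) with hγdef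
  have hden : (0:ℝ) < ν₁ * ν₂ + 4 * η ^ 2 * c ^ 2 := by positivity
  have hγ : 0 < γ := lt_min (by positivity) (lt_min (by positivity) (by positivity))
  have hγ3 : γ ≤ c * ν₂ := min_le_left _ _
  have hγ4 : γ ≤ 2 * c * ν₁ := le_trans (min_le_right _ _) (min_le_left _ _)
  have hγc2 : γ * (ν₁ * ν₂ + 4 * η ^ 2 * c ^ 2) ≤ 2 * ν₁ * η * c ^ 2 * ν₂ := by
    have h : γ ≤ (2 * ν₁ * η * c ^ 2 * ν₂) / (ν₁ * ν₂ + 4 * η ^ 2 * c ^ 2) :=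
      le_trans (min_le_right (c * ν₂) (min (2 * c * ν₁)
        ((2 * ν₁ * η * c ^ 2 * ν₂) / (ν₁ * ν₂ + 4 * η ^ 2 * c ^ 2))))
        (min_le_right (2 * c * ν₁) ((2 * ν₁ * η * c ^ 2 * ν₂) / (ν₁ * ν₂ + 4 * η ^ 2 * c ^ 2)))
    calc γ * (ν₁ * ν₂ + 4 * η ^ 2 * c ^ 2)
        ≤ (2 * ν₁ * η * c ^ 2 * ν₂) / (ν₁ * ν₂ + 4 * η ^ 2 * c ^ 2)
          * (ν₁ * ν₂ + 4 * η ^ 2 * c ^ 2) := mul_le_mul_of_nonneg_right h hden.le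
      _ = 2 * ν₁ * η * c ^ 2 * ν₂ := div_mul_cancel₀ _ hden.ne'
  set δ : ℝ := min (η * c ^ 2 / 3) (γ / 8) with hδdef
  have hδ : 0 < δ := lt_min (by positivity) (by positivity)
  have hδ1 : 3 * δ ≤ η * c ^ 2 := by
    have := min_le_left (η * c ^ 2 / 3) (γ / 8); linarith
  have hδ2 : 8 * δ ≤ γ := by
    have := min_le_right (η * c ^ 2 / 3) (γ / 8); linarith
  have hK : (0:ℝ) < 6 * M / m := by positivity
  refine ⟨Real.sqrt (6 * M / m), Real.sqrt_pos.2 hK, δ, hδ, ?_⟩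
  set C : ℝ := Real.sqrt (6 * M / m) with hCdef
  have hC2 : C ^ 2 = 6 * M / m := Real.sq_sqrt hK.le
  intro ρ hρ u Z hu hZ
  have hρ0 : 0 < ρ := lt_of_lt_of_le hc hρ
  have hγρ : γ ≤ ρ * ν₂ := by
    calc γ ≤ c * ν₂ := hγ3
      _ ≤ ρ * ν₂ := mul_le_mul_of_nonneg_right hρ hν₂.le
  have hγρ' : γ ≤ 2 * ρ * ν₁ := by
    calc γ ≤ 2 * c * ν₁ := hγ4
      _ ≤ 2 * ρ * ν₁ := by
          have : 2 * c ≤ 2 * ρ := by linarith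
          exact mul_le_mul_of_nonneg_right this hν₁.le
  -- component derivatives
  have hucoe : ∀ t : ℝ, ((ν₁ * ρ : ℂ) * Z t)
      = (Complex.ofReal (ν₁ * ρ)) * Z t := by
    intro t; push_cast; ring
  have hZcoe : ∀ t : ℝ, (-(η * ρ ^ 2 : ℂ) * Z t - ((ν₂ / 2 : ℂ) * ρ) * u t)
      = (Complex.ofReal (-(η * ρ ^ 2))) * Z t + (Complex.ofReal (-(ν₂ / 2 * ρ))) * u t := by
    intro t; push_cast; ring
  have ha : ∀ t : ℝ, 0 ≤ t →
      HasDerivAt (fun s => (u s).re) (ν₁ * ρ * (Z t).re) t := by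
    intro t ht
    have h := stmt8_re_deriv u _ t (hu t ht)
    rw [hucoe t] at h
    simpa [Complex.mul_re] using h
  have hb : ∀ t : ℝ, 0 ≤ t →
      HasDerivAt (fun s => (u s).im) (ν₁ * ρ * (Z t).im) t := by
    intro t ht
    have h := stmt8_im_deriv u _ t (hu t ht)
    rw [hucoe t] at h
    simpa [Complex.mul_im] using h
  have hp : ∀ t : ℝ, 0 ≤ t →
      HasDerivAt (fun s => (Z s).re)
        (-(η * ρ ^ 2) * (Z t).re - ν₂ / 2 * ρ * (u t).re) t := by
    intro t ht
    have h := stmt8_re_deriv Z _ t (hZ t ht)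
    rw [hZcoe t] at h
    simp only [Complex.add_re, Complex.mul_re, Complex.ofReal_re, Complex.ofReal_im,
      zero_mul, sub_zero] at h
    convert h using 1
    ring
  have hq : ∀ t : ℝ, 0 ≤ t →
      HasDerivAt (fun s => (Z s).im)
        (-(η * ρ ^ 2) * (Z t).im - ν₂ / 2 * ρ * (u t).im) t := by
    intro t ht
    have h := stmt8_im_deriv Z _ t (hZ t ht)
    rw [hZcoe t] at h
    simp only [Complex.add_im, Complex.mul_im, Complex.ofReal_re, Complex.ofReal_im,
      zero_mul, add_zero] at h
    convert h using 1
    ring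
  -- Lyapunov function
  set L : ℝ → ℝ := fun s =>
    ν₂ * ρ * ((u s).re ^ 2 + (u s).im ^ 2) + 2 * ν₁ * ρ * ((Z s).re ^ 2 + (Z s).im ^ 2)
      + γ * ((u s).re * (Z s).re + (u s).im * (Z s).im) with hLdef
  set g : ℝ → ℝ := fun s => L s * Real.exp (2 * δ * s) with hgdef
  have hLderiv : ∀ t : ℝ, 0 ≤ t → HasDerivAt L
      (-4 * ν₁ * η * ρ ^ 3 * ((Z t).re ^ 2 + (Z t).im ^ 2)
        + γ * ν₁ * ρ * ((Z t).re ^ 2 + (Z t).im ^ 2)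
        - γ * η * ρ ^ 2 * ((u t).re * (Z t).re + (u t).im * (Z t).im)
        - γ * ν₂ / 2 * ρ * ((u t).re ^ 2 + (u t).im ^ 2)) t := by
    intro t ht
    have hat := ha t ht
    have hbt := hb t ht
    have hpt := hp t ht
    have hqt := hq t ht
    have H := ((((hat.mul hat).add (hbt.mul hbt)).const_mul (ν₂ * ρ)).add
      ((((hpt.mul hpt).add (hqt.mul hqt)).const_mul (2 * ν₁ * ρ)).add
        (((hat.mul hpt).add (hbt.mul hqt)).const_mul γ)))
    have hfun : L = (fun x =>
        ν₂ * ρ * ((u x).re * (u x).re + (u x).im * (u x).im) +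
          (2 * ν₁ * ρ * ((Z x).re * (Z x).re + (Z x).im * (Z x).im) +
            γ * ((u x).re * (Z x).re + (u x).im * (Z x).im))) := by
      funext s; simp only [hLdef]; ring
    rw [hfun]
    refine H.congr_deriv ?_
    ring
  have hgderiv : ∀ t : ℝ, 0 ≤ t → HasDerivAt g
      (((-4 * ν₁ * η * ρ ^ 3 * ((Z t).re ^ 2 + (Z t).im ^ 2)
        + γ * ν₁ * ρ * ((Z t).re ^ 2 + (Z t).im ^ 2)
        - γ * η * ρ ^ 2 * ((u t).re * (Z t).re + (u t).im * (Z t).im)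
        - γ * ν₂ / 2 * ρ * ((u t).re ^ 2 + (u t).im ^ 2))
        + 2 * δ * L t) * Real.exp (2 * δ * t)) t := by
    intro t ht
    have hexp : HasDerivAt (fun s : ℝ => Real.exp (2 * δ * s))
        (2 * δ * Real.exp (2 * δ * t)) t := by
      simpa [mul_comm] using (((hasDerivAt_id t).const_mul (2 * δ)).exp)
    have H := (hLderiv t ht).mul hexp
    refine H.congr_deriv ?_
    ring
  have hgderiv_le : ∀ t : ℝ, 0 ≤ t →
      ((-4 * ν₁ * η * ρ ^ 3 * ((Z t).re ^ 2 + (Z t).im ^ 2)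
        + γ * ν₁ * ρ * ((Z t).re ^ 2 + (Z t).im ^ 2)
        - γ * η * ρ ^ 2 * ((u t).re * (Z t).re + (u t).im * (Z t).im)
        - γ * ν₂ / 2 * ρ * ((u t).re ^ 2 + (u t).im ^ 2))
        + 2 * δ * L t) * Real.exp (2 * δ * t) ≤ 0 := by
    intro t ht
    have hS0 : (0:ℝ) ≤ (u t).re ^ 2 + (u t).im ^ 2 := by positivity
    have hT0 : (0:ℝ) ≤ (Z t).re ^ 2 + (Z t).im ^ 2 := by positivity
    have h1 := stmt8_young1 ν₂ γ η ρ (u t).re (u t).im (Z t).re (Z t).im hγ.le hρ0.le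
    have h2 := stmt8_young2 δ γ ν₂ (u t).re (u t).im (Z t).re (Z t).im
      (by positivity)
    have key := stmt8_keyA η ν₁ ν₂ c ρ γ δ ((u t).re ^ 2 + (u t).im ^ 2)
      ((Z t).re ^ 2 + (Z t).im ^ 2) ((u t).re * (Z t).re + (u t).im * (Z t).im)
      hη hν₁ hν₂ hc hρ hγ hδ hγc2 hγ3 hγ4 hδ1 hδ2 hS0 hT0 h1 h2
    have hLt : L t = ν₂ * ρ * ((u t).re ^ 2 + (u t).im ^ 2)
        + 2 * ν₁ * ρ * ((Z t).re ^ 2 + (Z t).im ^ 2)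
        + γ * ((u t).re * (Z t).re + (u t).im * (Z t).im) := rfl
    have hfin : (-4 * ν₁ * η * ρ ^ 3 * ((Z t).re ^ 2 + (Z t).im ^ 2)
        + γ * ν₁ * ρ * ((Z t).re ^ 2 + (Z t).im ^ 2)
        - γ * η * ρ ^ 2 * ((u t).re * (Z t).re + (u t).im * (Z t).im)
        - γ * ν₂ / 2 * ρ * ((u t).re ^ 2 + (u t).im ^ 2))
        + 2 * δ * L t ≤ 0 := by rw [hLt]; linarith [key]
    exact mul_nonpos_of_nonpos_of_nonneg hfin (Real.exp_pos _).le
  -- Antitonicity of g on [0, ∞)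
  have hanti : AntitoneOn g (Set.Ici (0:ℝ)) := by
    apply antitoneOn_of_deriv_nonpos (convex_Ici 0)
    · intro t ht
      exact (hgderiv t ht).continuousAt.continuousWithinAt
    · intro t ht
      rw [interior_Ici] at ht
      exact (hgderiv t ht.le).differentiableAt.differentiableWithinAt
    · intro t ht
      rw [interior_Ici] at ht
      rw [(hgderiv t ht.le).deriv]
      exact hgderiv_le t ht.le
  intro t ht
  have hg0 : g t ≤ g 0 := hanti Set.self_mem_Ici ht ht
  have hgt : L t * Real.exp (2 * δ * t) ≤ L 0 := by
    have hgg : g 0 = L 0 := by simp [hgdef]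
    rw [← hgg]; exact hg0
  set E : ℝ := Real.exp (-δ * t) with hEdef
  have hE0 : 0 < E := Real.exp_pos _
  have hEE : Real.exp (2 * δ * t) * (E * E) = 1 := by
    rw [hEdef, ← Real.exp_add, ← Real.exp_add, ← Real.exp_zero]
    ring_nf
  have hdecay : L t ≤ L 0 * (E * E) := by
    calc L t = L t * (Real.exp (2 * δ * t) * (E * E)) := by rw [hEE]; ring
      _ = (L t * Real.exp (2 * δ * t)) * (E * E) := by ring
      _ ≤ L 0 * (E * E) := mul_le_mul_of_nonneg_right hgt (by positivity)
  set At := ‖u t‖ with hAt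
  set Bt := ‖Z t‖ with hBt
  set A0 := ‖u 0‖ with hA0
  set B0 := ‖Z 0‖ with hB0
  have hAt2 : (u t).re ^ 2 + (u t).im ^ 2 = At ^ 2 := by
    rw [hAt, Complex.sq_norm, Complex.normSq_apply]; ring
  have hBt2 : (Z t).re ^ 2 + (Z t).im ^ 2 = Bt ^ 2 := by
    rw [hBt, Complex.sq_norm, Complex.normSq_apply]; ring
  have hA02 : (u 0).re ^ 2 + (u 0).im ^ 2 = A0 ^ 2 := by
    rw [hA0, Complex.sq_norm, Complex.normSq_apply]; ring
  have hB02 : (Z 0).re ^ 2 + (Z 0).im ^ 2 = B0 ^ 2 := by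
    rw [hB0, Complex.sq_norm, Complex.normSq_apply]; ring
  have hlow : ρ * (ν₂ / 2 * At ^ 2 + ν₁ * Bt ^ 2) ≤ L t := by
    rw [← hAt2, ← hBt2]
    exact stmt8_low ν₁ ν₂ γ ρ (u t).re (u t).im (Z t).re (Z t).im hγ.le hγρ hγρ'
  have hup : L 0 ≤ ρ * (3 * ν₂ / 2 * A0 ^ 2 + 3 * ν₁ * B0 ^ 2) := by
    rw [← hA02, ← hB02]
    exact stmt8_up ν₁ ν₂ γ ρ (u 0).re (u 0).im (Z 0).re (Z 0).im hγ.le hγρ hγρ'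
  have step2 : ν₂ / 2 * At ^ 2 + ν₁ * Bt ^ 2
      ≤ (3 * ν₂ / 2 * A0 ^ 2 + 3 * ν₁ * B0 ^ 2) * (E * E) := by
    have step1 : ρ * (ν₂ / 2 * At ^ 2 + ν₁ * Bt ^ 2)
        ≤ ρ * ((3 * ν₂ / 2 * A0 ^ 2 + 3 * ν₁ * B0 ^ 2) * (E * E)) := by
      calc ρ * (ν₂ / 2 * At ^ 2 + ν₁ * Bt ^ 2) ≤ L t := hlow
        _ ≤ L 0 * (E * E) := hdecay
        _ ≤ ρ * (3 * ν₂ / 2 * A0 ^ 2 + 3 * ν₁ * B0 ^ 2) * (E * E) :=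
            mul_le_mul_of_nonneg_right hup (by positivity)
        _ = ρ * ((3 * ν₂ / 2 * A0 ^ 2 + 3 * ν₁ * B0 ^ 2) * (E * E)) := by ring
    exact le_of_mul_le_mul_left step1 hρ0
  have step3 : m * ((At + Bt) ^ 2) ≤ 6 * M * ((A0 + B0) ^ 2) * (E * E) := by
    have hm1 := stmt8_minmax1 m ν₁ ν₂ At Bt hmν₂ hmν₁
      (norm_nonneg _) (norm_nonneg _) hm.le
    have hm2 := stmt8_minmax2 M ν₁ ν₂ A0 B0 hMν₂ hMν₁
      (norm_nonneg _) (norm_nonneg _) hM.le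
    have hEE0 : (0:ℝ) ≤ E * E := by positivity
    calc m * ((At + Bt) ^ 2) ≤ 2 * (ν₂ / 2 * At ^ 2 + ν₁ * Bt ^ 2) := hm1
      _ ≤ 2 * ((3 * ν₂ / 2 * A0 ^ 2 + 3 * ν₁ * B0 ^ 2) * (E * E)) := by linarith [step2]
      _ ≤ 2 * (3 * M * ((A0 + B0) ^ 2) * (E * E)) := by
          have := mul_le_mul_of_nonneg_right hm2 hEE0
          linarith
      _ = 6 * M * ((A0 + B0) ^ 2) * (E * E) := by ring
  have step4 : (At + Bt) ^ 2 ≤ (C * E * (A0 + B0)) ^ 2 := by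
    have hR : (C * E * (A0 + B0)) ^ 2 = 6 * M / m * ((A0 + B0) ^ 2) * (E * E) := by
      rw [mul_pow, mul_pow, hC2]; ring
    rw [hR, show 6 * M / m * ((A0 + B0) ^ 2) * (E * E)
        = 6 * M * ((A0 + B0) ^ 2) * (E * E) / m from by ring, le_div_iff₀ hm]
    linarith [step3]
  have hABt : (0:ℝ) ≤ At + Bt := by positivity
  calc At + Bt = Real.sqrt ((At + Bt) ^ 2) := (Real.sqrt_sq hABt).symm
    _ ≤ Real.sqrt ((C * E * (A0 + B0)) ^ 2) := Real.sqrt_le_sqrt step4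
    _ = C * E * (A0 + B0) := Real.sqrt_sq (by positivity)
end

section
/- Fix c ≥ 1 and let c₂ = min{1/(c² + max{0, √(c⁴ − 2c²)}), 1/2}. There exists a constant C > 0 such that for every real ρ with 1 ≤ ρ ≤ c and ρ ≠ √2, the two (distinct) complex roots λ₊ ≠ λ₋ of λ² + ρ²λ + ρ²/2 = 0 satisfy, for all t ≥ 0, |(e^{λ₊t} − e^{λ₋t})/(λ₊ − λ₋)| ≤ C·e^{−(c₂/2)ρ²t}. -/
/-!
Every root `λ` of `λ² + sλ + s/2` with `s > 0` has `Re λ ≤ -c₂(s)·s`, where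
`c₂(s) = min (1/(s + √(s² - 2s))) (1/2)`: a non-real root has real part `-s/2`, and a real root
satisfies `λ = -s/(2(λ + s))` with `0 < 2(λ + s) ≤ s + √(s² - 2s)`. As `c₂` is antitone on
`s ≥ 1`, both roots at frequency `ρ ≤ c` lie in the half-plane `Re z ≤ -c₂(c²)ρ²`, and the mean
value theorem for `z ↦ e^{zt}` on this half-plane gives `|ℰ(t)| ≤ t e^{-c₂ρ²t}`. The factor `t`
is absorbed by half of the exponential decay: `t e^{-μt} ≤ (2/μ) e^{-μt/2}`.
-/

open Complex

noncomputable def rootDecayRate (s : ℝ) : ℝ := min (1 / (s + √(s ^ 2 - 2 * s))) (1 / 2)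

theorem rootDecayRate_pos {s : ℝ} (hs : 0 < s) : 0 < rootDecayRate s :=
  lt_min (by positivity) (by norm_num)

theorem rootDecayRate_antitoneOn : AntitoneOn rootDecayRate (Set.Ici 1) := by
  intro s (hs : 1 ≤ s) s' _ hss'
  have hdisc : s ^ 2 - 2 * s ≤ s' ^ 2 - 2 * s' := by nlinarith
  unfold rootDecayRate
  gcongr

theorem le_neg_div_of_sq_add_mul_add_half_eq_zero {s x : ℝ} (hs : 0 < s)
    (hx : x ^ 2 + s * x + s / 2 = 0) : x ≤ -(s / (s + √(s ^ 2 - 2 * s))) := by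
  have hsq : (2 * x + s) ^ 2 = s ^ 2 - 2 * s := by linear_combination 4 * hx
  have hle : 2 * x + s ≤ √(s ^ 2 - 2 * s) := by
    rw [← hsq, Real.sqrt_sq_eq_abs]; exact le_abs_self _
  have hpos : 0 < x + s := by nlinarith
  have hx' : x = -(s / (2 * (x + s))) := by field_simp; linear_combination 2 * hx
  rw [hx', neg_le_neg_iff]
  gcongr
  linarith

theorem re_le_neg_rootDecayRate_mul {s : ℝ} (hs : 0 < s) {l : ℂ}
    (hl : l ^ 2 + s * l + s / 2 = 0) : l.re ≤ -(rootDecayRate s * s) := by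
  have hre := congrArg re hl
  have him := congrArg im hl
  simp only [sq, add_re, add_im, mul_re, mul_im, ofReal_re, ofReal_im, div_ofNat_re, div_ofNat_im,
    zero_re, zero_im, zero_mul, sub_zero, add_zero, zero_div] at hre him
  replace him : l.im * (2 * l.re + s) = 0 := by linear_combination him
  rcases mul_eq_zero.mp him with hreal | hhalf
  · calc l.re ≤ -(s / (s + √(s ^ 2 - 2 * s))) :=
          le_neg_div_of_sq_add_mul_add_half_eq_zero hs
            (by rw [hreal] at hre; linear_combination hre)
      _ ≤ -(rootDecayRate s * s) := by
        rw [neg_le_neg_iff, ← one_div_mul_eq_div]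
        gcongr
        exact min_le_left _ _
  · have : rootDecayRate s ≤ 1 / 2 := min_le_right _ _
    nlinarith

theorem norm_cexp_mul_sub_cexp_mul_le {μ t : ℝ} (ht : 0 ≤ t) {a b : ℂ}
    (ha : a.re ≤ -μ) (hb : b.re ≤ -μ) :
    ‖exp (a * t) - exp (b * t)‖ ≤ t * Real.exp (-(μ * t)) * ‖a - b‖ := by
  have hderiv (z : ℂ) : HasDerivWithinAt (fun z : ℂ ↦ exp (z * t)) (exp (z * t) * t)
      {z | z.re ≤ -μ} z :=
    ((hasDerivAt_mul_const (t : ℂ)).cexp).hasDerivWithinAt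
  have hbound : ∀ z ∈ {z : ℂ | z.re ≤ -μ}, ‖exp (z * t) * t‖ ≤ t * Real.exp (-(μ * t)) := by
    intro z hz
    rw [norm_mul, norm_exp, norm_real, Real.norm_of_nonneg ht, mul_comm]
    gcongr
    simpa using mul_le_mul_of_nonneg_right (hz : z.re ≤ -μ) ht
  exact (convex_halfSpace_re_le (-μ)).norm_image_sub_le_of_norm_hasDerivWithin_le
    (fun z _ ↦ hderiv z) hbound hb ha

theorem norm_cexp_mul_sub_cexp_mul_div_sub_le {μ t : ℝ} (ht : 0 ≤ t) {a b : ℂ} (hab : a ≠ b)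
    (ha : a.re ≤ -μ) (hb : b.re ≤ -μ) :
    ‖(exp (a * t) - exp (b * t)) / (a - b)‖ ≤ t * Real.exp (-(μ * t)) := by
  rw [norm_div, div_le_iff₀ (norm_pos_iff.mpr (sub_ne_zero.mpr hab))]
  exact norm_cexp_mul_sub_cexp_mul_le ht ha hb

theorem mul_exp_neg_mul_le {μ : ℝ} (hμ : 0 < μ) (t : ℝ) :
    t * Real.exp (-(μ * t)) ≤ 2 / μ * Real.exp (-(μ / 2 * t)) := by
  have hsplit : Real.exp (-(μ * t)) = Real.exp (-(μ / 2 * t)) * Real.exp (-(μ / 2 * t)) := by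
    rw [← Real.exp_add]; ring_nf
  have key : μ / 2 * t * Real.exp (-(μ / 2 * t)) ≤ 1 := by
    rw [Real.exp_neg, ← div_eq_mul_inv, div_le_one (Real.exp_pos _)]
    linarith [Real.add_one_le_exp (μ / 2 * t)]
  rw [hsplit, ← mul_assoc]
  gcongr
  rw [le_div_iff₀ hμ]
  linarith

/-- Uniform bound on the Green-matrix building block
`ℰ(t) = (e^{λ₊t} − e^{λ₋t})/(λ₊ − λ₋)` of the linearized Oldroyd-B system
(`η = ν₁ = ν₂ = 1`) on intermediate frequencies `1 ≤ ρ ≤ c`, `ρ ≠ √2`: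
`|ℰ(t)| ≤ C e^{−(c₂/2)ρ²t}` with
`c₂ = min{1/(c² + max{0, √(c⁴ − 2c²)}), 1/2}`. -/
theorem stmt12 (c : ℝ) (hc : 1 ≤ c)
    (c₂ : ℝ)
    (hc₂ : c₂ = min (1 / (c ^ 2 + max 0 (Real.sqrt (c ^ 4 - 2 * c ^ 2)))) (1 / 2)) :
    ∃ C : ℝ, 0 < C ∧
      ∀ ρ : ℝ, 1 ≤ ρ → ρ ≤ c → ρ ≠ Real.sqrt 2 →
        ∀ lp lm : ℂ, lp ≠ lm →
          lp ^ 2 + (ρ ^ 2 : ℂ) * lp + (ρ ^ 2 / 2 : ℂ) = 0 →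
          lm ^ 2 + (ρ ^ 2 : ℂ) * lm + (ρ ^ 2 / 2 : ℂ) = 0 →
          ∀ t : ℝ, 0 ≤ t →
            ‖(Complex.exp (lp * t) - Complex.exp (lm * t)) / (lp - lm)‖
              ≤ C * Real.exp (-(c₂ / 2) * ρ ^ 2 * t) := by
  have hc₂_eq : c₂ = rootDecayRate (c ^ 2) := by
    rw [hc₂, max_eq_right (Real.sqrt_nonneg _), rootDecayRate]
    ring_nf
  have hc₂_pos : 0 < c₂ := hc₂_eq ▸ rootDecayRate_pos (by positivity)
  refine ⟨2 / c₂, by positivity, fun ρ hρ hρc _ lp lm hne hp hm t ht ↦ ?_⟩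
  have hρ2 : (1 : ℝ) ≤ ρ ^ 2 := one_le_pow₀ hρ
  have hrate : c₂ ≤ rootDecayRate (ρ ^ 2) := hc₂_eq ▸
    rootDecayRate_antitoneOn hρ2 (hρ2.trans (by gcongr)) (by gcongr)
  have hre {l : ℂ} (hl : l ^ 2 + (ρ ^ 2 : ℂ) * l + (ρ ^ 2 / 2 : ℂ) = 0) :
      l.re ≤ -(c₂ * ρ ^ 2) :=
    (re_le_neg_rootDecayRate_mul (s := ρ ^ 2) (by positivity) (by push_cast; exact hl)).trans
      (by gcongr)
  calc ‖(exp (lp * t) - exp (lm * t)) / (lp - lm)‖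
      ≤ t * Real.exp (-(c₂ * ρ ^ 2 * t)) :=
        norm_cexp_mul_sub_cexp_mul_div_sub_le ht hne (hre hp) (hre hm)
    _ ≤ 2 / (c₂ * ρ ^ 2) * Real.exp (-(c₂ * ρ ^ 2 / 2 * t)) :=
        mul_exp_neg_mul_le (by positivity) t
    _ ≤ 2 / c₂ * Real.exp (-(c₂ / 2) * ρ ^ 2 * t) := by
        rw [show -(c₂ * ρ ^ 2 / 2 * t) = -(c₂ / 2) * ρ ^ 2 * t by ring]
        gcongr
        exact le_mul_of_one_le_right hc₂_pos.le hρ2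
end
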